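/- arXiv:math/0310216 — 2 statements merged into one kernel-verified Lean document; each statement's English description precedes it below -/
import Mathlib

section
/- Let p, q ≥ 2 be coprime integers. The rational function Θ̂_{p,q}(s) has no pole at s = 1, and its value at s = 1 (equivalently, the limit as s → 1) equals (1/72)·p·(p² − 1)·q·(q² − 1). (Equivalently, the Vassiliev invariant v₃ of the torus knot T(p,q), which equals half this value, is (1/144)·p·(p² − 1)·q·(q² − 1).) -/
/-!
Put `y = s²`. Clearing the denominators of `ψ_{p,q}` and `ψ_{q,p}` gives
`Θ̂_{p,q}(s) = y^{p+q} N_{p,q}(y) N_{q,p}(y) / (2 y^{pq} (y^p − 1)³ (y^q − 1)³)`, where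
`N_{p,q}(y) = (y^{pq} − 1)(y^p + 1) − q (y^{pq} + 1)(y^p − 1)`. The Taylor coefficients of
`N_{p,q}` at `y = 1` are binomial sums; the first three vanish and the fourth is
`p³q(1 − q²)/6`. So `(y − 1)⁶` cancels, `y^p − 1 = (y − 1)(1 + y + ⋯ + y^{p−1})` leaves a
denominator with value `2p³q³` at `y = 1`, and the value of `Θ̂` there is
`(p³q(1 − q²)/6)(q³p(1 − p²)/6) / (2p³q³) = pq(p² − 1)(q² − 1)/72`.
-/

/-- `Δ_{p,q}(s) = ((s^{pq} − s^{−pq})(s − s^{−1})) / ((s^p − s^{−p})(s^q − s^{−q}))`,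
the Alexander polynomial of the `(p,q)` torus knot evaluated at `t = s²`. -/
noncomputable def torusDelta {F : Type*} [Field F] (p q : ℕ) (s : F) : F :=
  ((s ^ (p * q) - s⁻¹ ^ (p * q)) * (s - s⁻¹)) / ((s ^ p - s⁻¹ ^ p) * (s ^ q - s⁻¹ ^ q))

/-- `φ_{p,q}(s) = (s^p + s^{−p})/(s^p − s^{−p}) − q·(s^{pq} + s^{−pq})/(s^{pq} − s^{−pq})`. -/
noncomputable def torusPhi {F : Type*} [Field F] (p q : ℕ) (s : F) : F :=
  (s ^ p + s⁻¹ ^ p) / (s ^ p - s⁻¹ ^ p) -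
    (q : F) * ((s ^ (p * q) + s⁻¹ ^ (p * q)) / (s ^ (p * q) - s⁻¹ ^ (p * q)))

/-- `ψ_{p,q}(s) = Δ_{p,q}(s)·φ_{p,q}(s)`. -/
noncomputable def torusPsi {F : Type*} [Field F] (p q : ℕ) (s : F) : F :=
  torusDelta p q s * torusPhi p q s

/-- The 2-loop polynomial of the torus knot `T(p,q)`:
`Θ_{p,q}(s₁,s₂,s₃) = −(1/4)·Σ_{(i,j,k)} ψ_{p,q}(s_i)·ψ_{q,p}(s_j)·Δ_{p,q}(s_k)`,
the sum running over all six permutations `(i,j,k)` of `(1,2,3)`. -/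
noncomputable def torusTheta {F : Type*} [Field F] (p q : ℕ) (s₁ s₂ s₃ : F) : F :=
  -(1/4) * (torusPsi p q s₁ * torusPsi q p s₂ * torusDelta p q s₃
    + torusPsi p q s₁ * torusPsi q p s₃ * torusDelta p q s₂
    + torusPsi p q s₂ * torusPsi q p s₁ * torusDelta p q s₃
    + torusPsi p q s₂ * torusPsi q p s₃ * torusDelta p q s₁
    + torusPsi p q s₃ * torusPsi q p s₁ * torusDelta p q s₂
    + torusPsi p q s₃ * torusPsi q p s₂ * torusDelta p q s₁)

/-- The reduced 2-loop polynomial of the torus knot `T(p,q)`: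
`Θ̂_{p,q}(s) = ψ_{p,q}(s)·ψ_{q,p}(s) / (2(s − s^{−1})²)`. -/
noncomputable def torusThetaHat {F : Type*} [Field F] (p q : ℕ) (s : F) : F :=
  torusPsi p q s * torusPsi q p s / (2 * (s - s⁻¹) ^ 2)

open Polynomial

theorem exists_eq_X_sub_C_pow_mul_of_taylor_coeff {R : Type*} [CommRing R] {f : R[X]} {r : R}
    {n : ℕ} (h : ∀ k < n, (taylor r f).coeff k = 0) :
    ∃ g : R[X], f = (X - C r) ^ n * g ∧ g.eval r = (taylor r f).coeff n := by
  obtain ⟨g, rfl⟩ :=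
    X_sub_C_pow_dvd_iff.mpr (X_pow_dvd_iff.mpr (by simpa only [taylor_apply] using h))
  refine ⟨g, rfl, ?_⟩
  rw [taylor_mul, taylor_pow, taylor_apply (f := X - C r)]
  simp [coeff_X_pow_mul', taylor_coeff_zero]

theorem Nat.cast_choose_three {K : Type*} [Field K] [CharZero K] (n : ℕ) :
    (n.choose 3 : K) = n * (n - 1) * (n - 2) / 6 := by
  simp [Nat.cast_choose_eq_descPochhammer_div, descPochhammer_succ_eval, Nat.factorial]

/-- `φ_{p,q}(s) = torusNum p q (s²) / ((s^{2p} − 1)(s^{2pq} − 1))`. -/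
def torusNum {R : Type*} [CommRing R] (p q : ℕ) (y : R) : R :=
  (y ^ (p * q) - 1) * (y ^ p + 1) - q * ((y ^ (p * q) + 1) * (y ^ p - 1))

theorem map_torusNum {R S G : Type*} [CommRing R] [CommRing S] [FunLike G R S]
    [RingHomClass G R S] (f : G) (p q : ℕ) (y : R) :
    f (torusNum p q y) = torusNum p q (f y) := by
  simp [torusNum]

theorem taylor_torusNum {R : Type*} [CommRing R] (p q : ℕ) (r : R) :
    taylor r (torusNum p q X) = torusNum p q (X + C r) := by
  simpa using map_torusNum (taylorAlgHom r) p q X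

theorem coeff_torusNum_X_add_one {R : Type*} [CommRing R] (p q k : ℕ) :
    (torusNum p q (X + 1 : R[X])).coeff k =
      (1 - q) * ((p * q + p).choose k : R) + (1 + q) * (p * q).choose k
        - (1 + q) * p.choose k - (1 - q) * (0 : ℕ).choose k := by
  have hmonomials : torusNum p q (X + 1 : R[X]) = (1 - (q : R[X])) * (X + 1) ^ (p * q + p)
      + (1 + (q : R[X])) * (X + 1) ^ (p * q) - (1 + (q : R[X])) * (X + 1) ^ p
      - (1 - (q : R[X])) * (X + 1) ^ 0 := by
    unfold torusNum
    ring
  rw [hmonomials]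
  simp only [sub_mul, one_mul, add_mul, coeff_sub, coeff_add, coeff_X_add_one_pow,
    coeff_natCast_mul]

theorem exists_torusNum_eq_X_sub_one_pow_three_mul {K : Type*} [Field K] [CharZero K]
    (p q : ℕ) :
    ∃ M : K[X], torusNum p q X = (X - 1) ^ 3 * M ∧ M.eval 1 = p ^ 3 * q * (1 - q ^ 2) / 6 := by
  have htaylor : taylor 1 (torusNum p q (X : K[X])) = torusNum p q (X + 1) := by
    rw [taylor_torusNum, C_1]
  have hvanish : ∀ k < 3, (taylor 1 (torusNum p q (X : K[X]))).coeff k = 0 := by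
    intro k hk
    interval_cases k <;>
      simp only [htaylor, coeff_torusNum_X_add_one, Nat.choose_zero_right, Nat.choose_one_right,
        Nat.cast_choose_two, Nat.choose_zero_succ] <;> push_cast <;> ring
  obtain ⟨M, hM, hM1⟩ := exists_eq_X_sub_C_pow_mul_of_taylor_coeff hvanish
  refine ⟨M, by rwa [C_1] at hM, ?_⟩
  rw [hM1, htaylor, coeff_torusNum_X_add_one]
  simp only [Nat.cast_choose_three, Nat.choose_zero_succ]
  push_cast
  ring

section FieldIdentities

variable {F : Type*} [Field F] {s : F}

theorem pow_sub_inv_pow_eq (hs : s ≠ 0) (n : ℕ) :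
    s ^ n - s⁻¹ ^ n = ((s ^ 2) ^ n - 1) / s ^ n := by
  rw [inv_pow]
  field_simp
  ring

theorem pow_add_inv_pow_eq (hs : s ≠ 0) (n : ℕ) :
    s ^ n + s⁻¹ ^ n = ((s ^ 2) ^ n + 1) / s ^ n := by
  rw [inv_pow]
  field_simp
  ring

theorem torusPsi_eq_torusNum (p q : ℕ) (hs : s ≠ 0) (hp : (s ^ 2) ^ p ≠ 1)
    (hq : (s ^ 2) ^ q ≠ 1) (hpq : (s ^ 2) ^ (p * q) ≠ 1) :
    torusPsi p q s = (s - s⁻¹) * s ^ p * s ^ q * torusNum p q (s ^ 2) /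
      (s ^ (p * q) * ((s ^ 2) ^ p - 1) ^ 2 * ((s ^ 2) ^ q - 1)) := by
  have hp' : (s ^ 2) ^ p - 1 ≠ 0 := sub_ne_zero.mpr hp
  have hq' : (s ^ 2) ^ q - 1 ≠ 0 := sub_ne_zero.mpr hq
  have hpq' : (s ^ 2) ^ (p * q) - 1 ≠ 0 := sub_ne_zero.mpr hpq
  simp only [torusPsi, torusDelta, torusPhi, torusNum, pow_sub_inv_pow_eq hs,
    pow_add_inv_pow_eq hs]
  field_simp

theorem torusThetaHat_eq_torusNum (p q : ℕ) (hs : s ≠ 0) (hp : (s ^ 2) ^ p ≠ 1)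
    (hq : (s ^ 2) ^ q ≠ 1) (hpq : (s ^ 2) ^ (p * q) ≠ 1) :
    torusThetaHat p q s = (s ^ 2) ^ (p + q) * torusNum p q (s ^ 2) * torusNum q p (s ^ 2) /
      (2 * (s ^ 2) ^ (p * q) * ((s ^ 2) ^ p - 1) ^ 3 * ((s ^ 2) ^ q - 1) ^ 3) := by
  have h1 : s ^ 2 ≠ 1 := fun h => hp (by rw [h, one_pow])
  have hs' : s - s⁻¹ ≠ 0 := fun h => h1 (by field_simp at h; linear_combination h)
  have hp' : (s ^ 2) ^ p - 1 ≠ 0 := sub_ne_zero.mpr hp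
  have hq' : (s ^ 2) ^ q - 1 ≠ 0 := sub_ne_zero.mpr hq
  rw [torusThetaHat, torusPsi_eq_torusNum p q hs hp hq hpq,
    torusPsi_eq_torusNum q p hs hq hp (by rwa [mul_comm]), mul_comm q p]
  field_simp
  ring

end FieldIdentities

theorem RatFunc.X_pow_ne_one {K : Type*} [Field K] {n : ℕ} (hn : n ≠ 0) :
    (RatFunc.X : RatFunc K) ^ n ≠ 1 := by
  rw [← RatFunc.algebraMap_X, ← map_pow, ← map_one (algebraMap K[X] (RatFunc K))]
  refine (RatFunc.algebraMap_injective K).ne fun h => hn ?_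
  simpa using congrArg natDegree h

theorem torusThetaHat_ratFuncX_eq {K : Type*} [Field K] {p q : ℕ} (hp : p ≠ 0) (hq : q ≠ 0)
    {M M' : K[X]} (hM : torusNum p q X = (X - 1) ^ 3 * M)
    (hM' : torusNum q p X = (X - 1) ^ 3 * M') :
    torusThetaHat p q (RatFunc.X : RatFunc K) =
      algebraMap K[X] (RatFunc K) (expand K 2 (X ^ (p + q) * M * M')) /
        algebraMap K[X] (RatFunc K) (expand K 2
          (2 * X ^ (p * q) * (∑ i ∈ Finset.range p, X ^ i) ^ 3 *
            (∑ i ∈ Finset.range q, X ^ i) ^ 3)) := by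
  set ι := (algebraMap K[X] (RatFunc K)).comp (expand K 2 : K[X] →+* K[X])
  have hιX : ι X = RatFunc.X ^ 2 := by simp [ι]
  have hy : ∀ n ≠ 0, (RatFunc.X ^ 2 : RatFunc K) ^ n ≠ 1 := fun n hn => by
    rw [← pow_mul]
    exact RatFunc.X_pow_ne_one (by omega)
  have hgeom (n : ℕ) : ι X ^ n - 1 = ι (∑ i ∈ Finset.range n, X ^ i) * (ι X - 1) := by
    rw [map_sum, ← geom_sum_mul]
    simp only [map_pow]
  have hnum {a b : ℕ} {N : K[X]} (h : torusNum a b X = (X - 1) ^ 3 * N) :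
      torusNum a b (ι X) = (ι X - 1) ^ 3 * ι N := by
    rw [← map_torusNum, h, map_mul, map_pow, map_sub, map_one]
  change _ = ι _ / ι _
  rw [torusThetaHat_eq_torusNum p q RatFunc.X_ne_zero (hy p hp) (hy q hq)
    (hy _ (mul_ne_zero hp hq)), ← hιX, hnum hM, hnum hM', hgeom, hgeom]
  simp only [map_mul, map_pow, map_ofNat]
  have hy1 : ι X - 1 ≠ 0 := by
    rw [hιX, sub_ne_zero, ← pow_one (RatFunc.X ^ 2)]
    exact hy 1 one_ne_zero
  -- cancelling only `(ι X - 1)⁶` spares us proving the geometric sums nonzero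
  rw [eq_comm, ← mul_div_mul_right _ _ (pow_ne_zero 6 hy1)]
  congr 1 <;> ring

theorem torusThetaHat_value_at_one_general (p q : ℕ) (hp : 2 ≤ p) (hq : 2 ≤ q) :
    ∃ f g : ℚ[X],
      torusThetaHat p q (RatFunc.X : RatFunc ℚ) =
        algebraMap ℚ[X] (RatFunc ℚ) f / algebraMap ℚ[X] (RatFunc ℚ) g ∧
      g.eval 1 ≠ 0 ∧
      f.eval 1 / g.eval 1 =
        (1/72 : ℚ) * p * ((p : ℚ) ^ 2 - 1) * q * ((q : ℚ) ^ 2 - 1) := by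
  obtain ⟨M, hM, hM1⟩ := exists_torusNum_eq_X_sub_one_pow_three_mul (K := ℚ) p q
  obtain ⟨M', hM', hM'1⟩ := exists_torusNum_eq_X_sub_one_pow_three_mul (K := ℚ) q p
  refine ⟨_, _, torusThetaHat_ratFuncX_eq (by omega) (by omega) hM hM', ?_, ?_⟩
  all_goals simp only [expand_eval, one_pow, eval_mul, eval_pow, eval_X, eval_ofNat, mul_one,
    one_mul, eval_finsetSum, Finset.sum_const, Finset.card_range, nsmul_eq_mul, hM1, hM'1]
  · positivity
  · have hp0 : (p : ℚ) ≠ 0 := Nat.cast_ne_zero.mpr (by omega)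
    have hq0 : (q : ℚ) ≠ 0 := Nat.cast_ne_zero.mpr (by omega)
    field_simp
    ring

/-- For coprime integers `p, q ≥ 2`, the reduced 2-loop polynomial `Θ̂_{p,q}(s)` has no
pole at `s = 1`, and its value there equals `(1/72)·p·(p² − 1)·q·(q² − 1)`: it can be
written as `f/g` with polynomials `f, g` such that `g(1) ≠ 0` and
`f(1)/g(1) = (1/72)·p·(p² − 1)·q·(q² − 1)`.  (Equivalently, the Vassiliev invariant `v₃`
of `T(p,q)`, which is half this value, equals `(1/144)·p·(p² − 1)·q·(q² − 1)`.) -/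
theorem torusThetaHat_value_at_one (p q : ℕ) (hp : 2 ≤ p) (hq : 2 ≤ q)
    (hpq : Nat.Coprime p q) :
    ∃ f g : ℚ[X],
      torusThetaHat p q (RatFunc.X : RatFunc ℚ) =
        algebraMap ℚ[X] (RatFunc ℚ) f / algebraMap ℚ[X] (RatFunc ℚ) g ∧
      g.eval 1 ≠ 0 ∧
      f.eval 1 / g.eval 1 =
        (1/72 : ℚ) * p * ((p : ℚ) ^ 2 - 1) * q * ((q : ℚ) ^ 2 - 1) :=
  torusThetaHat_value_at_one_general p q hp hq
end

section
/- Let p and q be coprime positive integers. Specializing the rational function Θ_{p,q}(s₁, s₂, s₃) ∈ ℚ(s₁, s₂) (with s₃ = (s₁s₂)^{−1}) along s₂ = s₁^{−1} (so that s₃ = 1) yields, in ℚ(s₁): Θ_{p,q}(s₁, s₁^{−1}, 1) = (1/2)·ψ_{p,q}(s₁)·ψ_{q,p}(s₁), where the factors Δ_{p,q} and ψ_{p,q} evaluated at the point 1 are interpreted by their limits there, namely Δ_{p,q}(1) = 1 and ψ_{p,q}(1) = 0. Consequently Θ_{p,q}(s, s^{−1}, 1) / (s − s^{−1})² = Θ̂_{p,q}(s).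 -/
open scoped Classical

/-- `Δ_{p,q}` with its value at the point `1` interpreted by its limit there,
namely `Δ_{p,q}(1) = 1`. -/
noncomputable def torusDeltaReg {F : Type*} [Field F] (p q : ℕ) (s : F) : F :=
  if s = 1 then 1 else torusDelta p q s

/-- `ψ_{p,q}` with its value at the point `1` interpreted by its limit there,
namely `ψ_{p,q}(1) = 0`. -/
noncomputable def torusPsiReg {F : Type*} [Field F] (p q : ℕ) (s : F) : F :=
  if s = 1 then 0 else torusPsi p q s

/-- The 2-loop polynomial `Θ_{p,q}(s₁,s₂,s₃)` with the factors `Δ_{p,q}`, `ψ_{p,q}`,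
`ψ_{q,p}` evaluated at the point `1` interpreted by their limits there. -/
noncomputable def torusThetaReg {F : Type*} [Field F] (p q : ℕ) (s₁ s₂ s₃ : F) : F :=
  -(1/4) * (torusPsiReg p q s₁ * torusPsiReg q p s₂ * torusDeltaReg p q s₃
    + torusPsiReg p q s₁ * torusPsiReg q p s₃ * torusDeltaReg p q s₂
    + torusPsiReg p q s₂ * torusPsiReg q p s₁ * torusDeltaReg p q s₃
    + torusPsiReg p q s₂ * torusPsiReg q p s₃ * torusDeltaReg p q s₁
    + torusPsiReg p q s₃ * torusPsiReg q p s₁ * torusDeltaReg p q s₂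
    + torusPsiReg p q s₃ * torusPsiReg q p s₂ * torusDeltaReg p q s₁)

/-!
Under `s ↦ s⁻¹` the function `Δ_{p,q}` is even and `ψ_{p,q}` is odd. At `(s, s⁻¹, 1)` the four
terms of `Θ_{p,q}` containing `ψ(1) = 0` vanish, and the two remaining ones, carrying
`Δ_{p,q}(1) = 1`, both equal `-ψ_{p,q}(s)·ψ_{q,p}(s)`.
-/

variable {F : Type*} [Field F]

lemma torusDelta_inv (p q : ℕ) (s : F) : torusDelta p q s⁻¹ = torusDelta p q s := by
  unfold torusDelta
  rw [inv_inv]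
  congr 1 <;> ring

lemma torusPsi_inv (p q : ℕ) (s : F) : torusPsi p q s⁻¹ = -torusPsi p q s := by
  have swap : ∀ a b : F, (a + b) / (a - b) = -((b + a) / (b - a)) := fun a b => by
    rw [← neg_sub b a, div_neg, add_comm]
  unfold torusPsi torusPhi
  rw [torusDelta_inv, inv_inv, swap (s⁻¹ ^ p), swap (s⁻¹ ^ (p * q))]
  ring

lemma torusThetaReg_inv_one [CharZero F] (p q : ℕ) {s : F} (hs : s ≠ 1) :
    torusThetaReg p q s s⁻¹ 1 = 1 / 2 * (torusPsi p q s * torusPsi q p s) := by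
  have hs' : s⁻¹ ≠ 1 := inv_ne_one.mpr hs
  simp only [torusThetaReg, torusPsiReg, torusDeltaReg, if_pos, if_neg hs, if_neg hs',
    torusPsi_inv]
  ring

lemma torusThetaReg_inv_one_div_sq [CharZero F] (p q : ℕ) {s : F} (hs : s ≠ 1) :
    torusThetaReg p q s s⁻¹ 1 / (s - s⁻¹) ^ 2 = torusThetaHat p q s := by
  rw [torusThetaReg_inv_one p q hs, torusThetaHat, one_div_mul_eq_div, div_div]

lemma RatFunc.X_ne_one {K : Type*} [Field K] : (RatFunc.X : RatFunc K) ≠ 1 := fun h => by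
  simpa using congrArg RatFunc.intDegree h

theorem torusTheta_specialization_general (p q : ℕ) :
    torusThetaReg p q (RatFunc.X : RatFunc ℚ) (RatFunc.X : RatFunc ℚ)⁻¹ 1 =
      (1/2) * (torusPsi p q (RatFunc.X : RatFunc ℚ) *
        torusPsi q p (RatFunc.X : RatFunc ℚ)) ∧
    torusThetaReg p q (RatFunc.X : RatFunc ℚ) (RatFunc.X : RatFunc ℚ)⁻¹ 1 /
        ((RatFunc.X : RatFunc ℚ) - (RatFunc.X : RatFunc ℚ)⁻¹) ^ 2 =
      torusThetaHat p q (RatFunc.X : RatFunc ℚ) :=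
  ⟨torusThetaReg_inv_one p q RatFunc.X_ne_one,
    torusThetaReg_inv_one_div_sq p q RatFunc.X_ne_one⟩

/-- Specializing `Θ_{p,q}(s₁, s₂, (s₁s₂)⁻¹)` along `s₂ = s₁⁻¹` (so that `s₃ = 1`), with
the factors at the point `1` interpreted by their limits (`Δ_{p,q}(1) = 1`,
`ψ_{p,q}(1) = 0`), yields `Θ_{p,q}(s, s⁻¹, 1) = (1/2)·ψ_{p,q}(s)·ψ_{q,p}(s)` in `ℚ(s)`;
consequently `Θ_{p,q}(s, s⁻¹, 1)/(s − s⁻¹)² = Θ̂_{p,q}(s)`. -/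
theorem torusTheta_specialization (p q : ℕ) (hp : 0 < p) (hq : 0 < q)
    (hpq : Nat.Coprime p q) :
    torusThetaReg p q (RatFunc.X : RatFunc ℚ) (RatFunc.X : RatFunc ℚ)⁻¹ 1 =
      (1/2) * (torusPsi p q (RatFunc.X : RatFunc ℚ) *
        torusPsi q p (RatFunc.X : RatFunc ℚ)) ∧
    torusThetaReg p q (RatFunc.X : RatFunc ℚ) (RatFunc.X : RatFunc ℚ)⁻¹ 1 /
        ((RatFunc.X : RatFunc ℚ) - (RatFunc.X : RatFunc ℚ)⁻¹) ^ 2 =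
      torusThetaHat p q (RatFunc.X : RatFunc ℚ) :=
  torusTheta_specialization_general p q
end
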